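/- Let $A$ be an $n \times n$ positive definite Hermitian matrix with eigenvalues $\mu_1,\dots,\mu_n > 0$ and $n \geq 2$. Then the matrix $B = \frac{1}{n-1}\big((\operatorname{tr} A^{-1}) I - A^{-1}\big)$ is positive definite and $\det B \geq \det(A^{-1})$. -/

import Mathlib

/-!
Conjugating by the unitary that diagonalises `A⁻¹ = U diag(μ) U*` turns `B` into the diagonal
matrix of the means `dᵢ = (∑_{k ≠ i} μₖ) / (n - 1)`, which are positive. By AM-GM,
`∏_{k ≠ i} μₖ ≤ dᵢ ^ (n - 1)`; multiplying over `i`, every `μₖ` occurs `n - 1` times on the left,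
so `(det A⁻¹) ^ (n - 1) ≤ (det B) ^ (n - 1)`.
-/

open Matrix ComplexOrder

section Means

open Finset

theorem Finset.prod_prod_erase_eq_pow {ι M : Type*} [Fintype ι] [DecidableEq ι] [CommMonoid M]
    (f : ι → M) : ∏ i, ∏ k ∈ univ.erase i, f k = (∏ i, f i) ^ (Fintype.card ι - 1) := by
  calc ∏ i, ∏ k ∈ univ.erase i, f k = ∏ i, ∏ k, if k ≠ i then f k else 1 := by
        simp [prod_ite, filter_ne']
    _ = ∏ k, ∏ i, if k ≠ i then f k else 1 := prod_comm
    _ = ∏ k, f k ^ (Fintype.card ι - 1) := by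
        refine prod_congr rfl fun k _ => ?_
        simp [prod_ite, filter_ne, card_erase_of_mem]
    _ = _ := prod_pow _ _ _

theorem Real.prod_le_sum_div_card_pow {ι : Type*} (s : Finset ι) {z : ι → ℝ}
    (hz : ∀ i ∈ s, 0 ≤ z i) : ∏ i ∈ s, z i ≤ ((∑ i ∈ s, z i) / #s) ^ #s := by
  rcases s.eq_empty_or_nonempty with rfl | hs
  · simp
  have hcard : (0 : ℝ) < #s := by exact_mod_cast hs.card_pos
  have hamgm := Real.geom_mean_le_arith_mean s (fun _ => 1) z (fun _ _ => zero_le_one)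
    (by simpa using hcard) hz
  simp only [Real.rpow_one, one_mul, sum_const, nsmul_eq_mul, mul_one] at hamgm
  calc ∏ i ∈ s, z i = ((∏ i ∈ s, z i) ^ (#s : ℝ)⁻¹) ^ #s := by
        rw [← Real.rpow_natCast, ← Real.rpow_mul (prod_nonneg hz), inv_mul_cancel₀ hcard.ne',
          Real.rpow_one]
    _ ≤ _ := by gcongr; exact Real.rpow_nonneg (prod_nonneg hz) _

theorem Real.prod_le_prod_inv_card_sub_one_mul_sum_sub {ι : Type*} [Fintype ι] [Nontrivial ι]
    {μ : ι → ℝ} (hμ : ∀ i, 0 ≤ μ i) :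
    ∏ i, μ i ≤ ∏ i, ((Fintype.card ι : ℝ) - 1)⁻¹ * (∑ k, μ k - μ i) := by
  classical
  have hι : 1 < Fintype.card ι := Fintype.one_lt_card
  have hcard : ∀ i, #((univ : Finset ι).erase i) = Fintype.card ι - 1 := fun i => by
    rw [card_erase_of_mem (mem_univ i), card_univ]
  have hmean : ∀ i, ((Fintype.card ι : ℝ) - 1)⁻¹ * (∑ k, μ k - μ i)
      = (∑ k ∈ univ.erase i, μ k) / #((univ : Finset ι).erase i) := fun i => by
    rw [sum_erase_eq_sub (mem_univ i), hcard, Nat.cast_sub hι.le, Nat.cast_one, inv_mul_eq_div]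
  simp_rw [hmean]
  refine (pow_le_pow_iff_left₀ (prod_nonneg fun i _ => hμ i)
    (prod_nonneg fun i _ => div_nonneg (sum_nonneg fun k _ => hμ k) (Nat.cast_nonneg _))
    (Nat.sub_ne_zero_of_lt hι)).mp ?_
  calc (∏ i, μ i) ^ (Fintype.card ι - 1) = ∏ i, ∏ k ∈ univ.erase i, μ k :=
        (prod_prod_erase_eq_pow μ).symm
    _ ≤ ∏ i, ((∑ k ∈ univ.erase i, μ k) / #(univ.erase i)) ^ #((univ : Finset ι).erase i) :=
        prod_le_prod (fun i _ => prod_nonneg fun k _ => hμ k)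
          fun i _ => Real.prod_le_sum_div_card_pow _ fun k _ => hμ k
    _ = _ := by simp_rw [hcard, prod_pow]

end Means

namespace Matrix

open Unitary

theorem det_conjStarAlgAut {n R : Type*} [Fintype n] [DecidableEq n] [CommRing R] [StarRing R]
    (u : unitary (Matrix n n R)) (X : Matrix n n R) :
    (conjStarAlgAut R _ u X).det = X.det := by
  rw [conjStarAlgAut_apply, det_mul_right_comm, mul_star_self_of_mem u.2, one_mul]

variable {n 𝕜 : Type*} [Fintype n] [DecidableEq n] [RCLike 𝕜] {M : Matrix n n 𝕜}

theorem IsHermitian.smul_sub_eq_conjStarAlgAut (hM : M.IsHermitian) (c t : ℝ) :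
    (c : 𝕜) • ((t : 𝕜) • 1 - M) = conjStarAlgAut 𝕜 _ hM.eigenvectorUnitary
      (diagonal fun i => ((c * (t - hM.eigenvalues i) : ℝ) : 𝕜)) := by
  conv_lhs => rw [hM.spectral_theorem, ← map_one (conjStarAlgAut 𝕜 _ hM.eigenvectorUnitary),
    ← map_smul, ← map_sub, ← map_smul]
  congr 1
  ext i j
  by_cases hij : i = j <;> simp [diagonal, hij, mul_sub, mul_comm]

theorem IsHermitian.posDef_smul_sub (hM : M.IsHermitian) {c t : ℝ}
    (h : ∀ i, 0 < c * (t - hM.eigenvalues i)) : ((c : 𝕜) • ((t : 𝕜) • 1 - M)).PosDef := by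
  rw [hM.smul_sub_eq_conjStarAlgAut, conjStarAlgAut_apply,
    isUnit_coe.posDef_star_right_conjugate_iff, posDef_diagonal_iff]
  exact fun i => RCLike.ofReal_pos.mpr (h i)

theorem IsHermitian.det_smul_sub (hM : M.IsHermitian) (c t : ℝ) :
    ((c : 𝕜) • ((t : 𝕜) • 1 - M)).det = ((∏ i, c * (t - hM.eigenvalues i) : ℝ) : 𝕜) := by
  rw [hM.smul_sub_eq_conjStarAlgAut, det_conjStarAlgAut, det_diagonal, RCLike.ofReal_prod]

end Matrix

theorem stmt_6 (n : ℕ) (hn : 2 ≤ n) (A : Matrix (Fin n) (Fin n) ℂ)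
    (hA : A.PosDef) :
    ((((n : ℂ) - 1)⁻¹ • ((A⁻¹.trace • (1 : Matrix (Fin n) (Fin n) ℂ)) - A⁻¹))).PosDef ∧
    (A⁻¹.det).re ≤
      ((((n : ℂ) - 1)⁻¹ • ((A⁻¹.trace • (1 : Matrix (Fin n) (Fin n) ℂ)) - A⁻¹))).det.re := by
  have hA' := hA.inv
  have : Nontrivial (Fin n) := Fin.nontrivial_iff_two_le.mpr hn
  set μ := hA'.isHermitian.eigenvalues
  have hc : ((n : ℂ) - 1)⁻¹ = (((n : ℝ) - 1)⁻¹ : ℝ) := by push_cast; rfl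
  have ht : A⁻¹.trace = ((∑ k, μ k : ℝ) : ℂ) := by
    rw [hA'.isHermitian.trace_eq_sum_eigenvalues]; push_cast; rfl
  -- the matrix lemmas are stated with the coercion `RCLike.ofReal`, not `Complex.ofReal`
  rw [hc, ht, ← RCLike.ofReal_eq_complex_ofReal]
  constructor
  · refine hA'.isHermitian.posDef_smul_sub fun i => mul_pos ?_ (sub_pos.mpr ?_)
    · have : (2 : ℝ) ≤ n := by exact_mod_cast hn
      exact inv_pos.mpr (by linarith)
    · obtain ⟨j, hji⟩ := exists_ne i
      exact Finset.single_lt_sum hji (Finset.mem_univ i) (Finset.mem_univ j)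
        (hA'.eigenvalues_pos j) fun k _ _ => (hA'.eigenvalues_pos k).le
  · rw [hA'.isHermitian.det_smul_sub, hA'.isHermitian.det_eq_prod_eigenvalues,
      ← RCLike.ofReal_prod, RCLike.ofReal_eq_complex_ofReal, Complex.ofReal_re, Complex.ofReal_re]
    simpa using Real.prod_le_prod_inv_card_sub_one_mul_sum_sub fun i => (hA'.eigenvalues_pos i).le
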